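/- arXiv:1907.03343 — 5 statements merged into one kernel-verified Lean document; each statement's English description precedes it below -/
import Mathlib

section
/- Let G : ℝ^s → ℝ^d be differentiable, ν_G-strongly smooth (‖G(z') − G(z) − DG(z)(z' − z)‖ ≤ (ν_G/2)‖z' − z‖² for all z, z') and κ_G-Lipschitz (‖G(z') − G(z)‖ ≤ κ_G‖z' − z‖ for all z, z'). Fix w, λ ∈ ℝ^d with ‖λ‖ ≤ λ_max, fix ρ > 0, and fix a basepoint z ∈ ℝ^s with ‖w − G(z)‖ ≤ a. Define φ(ζ) := ⟨w − G(ζ), λ⟩ + (ρ/2)‖w − G(ζ)‖², whose gradient is ∇φ(ζ) = −DG(ζ)ᵀ(λ + ρ(w − G(ζ))). Then for every z' ∈ ℝ^s: φ(z') − φ(z) − ⟨z' − z, ∇φ(z)⟩ ≤ (ξ/2)‖z' − z‖², where ξ := ν_G(λ_max + ρ·a) + 2ρκ_G². (Inequality (ii) of the smoothness lemma for the augmented Lagrangian.) -/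
open scoped RealInnerProductSpace

set_option maxHeartbeats 1000000 in
/-- inequality (ii) of the smoothness lemma for the augmented
Lagrangian. For `φ(ζ) := ⟪w − G ζ, λ⟫ + (ρ/2)‖w − G ζ‖²`, with gradient
`∇φ(ζ) = −DG(ζ)ᵀ(λ + ρ(w − G ζ))`, one has
`φ(z') − φ(z) − ⟪z' − z, ∇φ(z)⟫ ≤ (ξ/2)‖z' − z‖²` where
`ξ := ν_G(λ_max + ρ·a) + 2ρκ_G²`. -/
theorem augmented_penalty_strongly_smooth_in_z {s d : ℕ}
    (G : EuclideanSpace ℝ (Fin s) → EuclideanSpace ℝ (Fin d))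
    (DG : EuclideanSpace ℝ (Fin s) →
      EuclideanSpace ℝ (Fin s) →L[ℝ] EuclideanSpace ℝ (Fin d))
    (hdiff : ∀ ζ, HasFDerivAt G (DG ζ) ζ)
    (νG κG : ℝ)
    (hsmooth : ∀ z z' : EuclideanSpace ℝ (Fin s),
      ‖G z' - G z - DG z (z' - z)‖ ≤ νG / 2 * ‖z' - z‖ ^ 2)
    (hLip : ∀ z z' : EuclideanSpace ℝ (Fin s), ‖G z' - G z‖ ≤ κG * ‖z' - z‖)
    (w lam : EuclideanSpace ℝ (Fin d)) (lamMax : ℝ) (hlam : ‖lam‖ ≤ lamMax)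
    (ρ : ℝ) (hρ : 0 < ρ)
    (z : EuclideanSpace ℝ (Fin s)) (a : ℝ) (ha : ‖w - G z‖ ≤ a) :
    ∀ z' : EuclideanSpace ℝ (Fin s),
      (⟪w - G z', lam⟫ + ρ / 2 * ‖w - G z'‖ ^ 2)
        - (⟪w - G z, lam⟫ + ρ / 2 * ‖w - G z‖ ^ 2)
        - ⟪z' - z, -((DG z).adjoint (lam + ρ • (w - G z)))⟫
      ≤ (νG * (lamMax + ρ * a) + 2 * ρ * κG ^ 2) / 2 * ‖z' - z‖ ^ 2 := by
  intro z'
  set u := w - G z with hu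
  set Δ := G z' - G z with hΔ
  set e := G z' - G z - DG z (z' - z) with he
  have hip : ⟪z' - z, -((DG z).adjoint (lam + ρ • u))⟫
      = -(⟪DG z (z' - z), lam⟫ + ρ * ⟪DG z (z' - z), u⟫) := by
    rw [inner_neg_right, ContinuousLinearMap.adjoint_inner_right, inner_add_right,
      real_inner_smul_right]
  have hwz' : w - G z' = u - Δ := by rw [hu, hΔ]; abel
  have hnorm : ‖u - Δ‖ ^ 2 = ‖u‖ ^ 2 - 2 * ⟪u, Δ⟫ + ‖Δ‖ ^ 2 := by
    rw [norm_sub_sq_real]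
  have hDh : (DG z (z' - z) : EuclideanSpace ℝ (Fin d)) = Δ - e := by
    rw [he, hΔ]; abel
  have key : (⟪w - G z', lam⟫ + ρ / 2 * ‖w - G z'‖ ^ 2)
        - (⟪u, lam⟫ + ρ / 2 * ‖u‖ ^ 2)
        - ⟪z' - z, -((DG z).adjoint (lam + ρ • u))⟫
      = -⟪e, lam⟫ - ρ * ⟪e, u⟫ + ρ / 2 * ‖Δ‖ ^ 2 := by
    rw [hip, hwz', hnorm, hDh]
    simp only [inner_sub_left]
    rw [real_inner_comm u Δ]
    ring
  rw [key]
  have h1 : ‖e‖ ≤ νG / 2 * ‖z' - z‖ ^ 2 := hsmooth z z'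
  have h2 : ‖Δ‖ ≤ κG * ‖z' - z‖ := hLip z z'
  have hlam0 : (0:ℝ) ≤ lamMax := le_trans (norm_nonneg _) hlam
  have ha0 : (0:ℝ) ≤ a := le_trans (norm_nonneg _) ha
  have b1 : -⟪e, lam⟫ ≤ ‖e‖ * lamMax := by
    have h := abs_le.mp (abs_real_inner_le_norm e lam)
    nlinarith [norm_nonneg e]
  have b2 : -⟪e, u⟫ ≤ ‖e‖ * a := by
    have h := abs_le.mp (abs_real_inner_le_norm e u)
    nlinarith [norm_nonneg e]
  have hΔ2 : ‖Δ‖ ^ 2 ≤ κG ^ 2 * ‖z' - z‖ ^ 2 := by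
    calc ‖Δ‖ ^ 2 ≤ (κG * ‖z' - z‖) ^ 2 := pow_le_pow_left₀ (norm_nonneg Δ) h2 2
    _ = κG ^ 2 * ‖z' - z‖ ^ 2 := by ring
  have c1 : -⟪e, lam⟫ ≤ (νG / 2 * ‖z' - z‖ ^ 2) * lamMax :=
    b1.trans (mul_le_mul_of_nonneg_right h1 hlam0)
  have c2 : -⟪e, u⟫ ≤ (νG / 2 * ‖z' - z‖ ^ 2) * a :=
    b2.trans (mul_le_mul_of_nonneg_right h1 ha0)
  have c2' : -(ρ * ⟪e, u⟫) ≤ ρ * ((νG / 2 * ‖z' - z‖ ^ 2) * a) := by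
    rw [neg_mul_eq_mul_neg]
    exact mul_le_mul_of_nonneg_left c2 hρ.le
  have c3 : ρ / 2 * ‖Δ‖ ^ 2 ≤ ρ / 2 * (κG ^ 2 * ‖z' - z‖ ^ 2) :=
    mul_le_mul_of_nonneg_left hΔ2 (by linarith)
  have hextra : 0 ≤ ρ * (κG ^ 2 * ‖z' - z‖ ^ 2) :=
    mul_nonneg hρ.le (mul_nonneg (sq_nonneg _) (sq_nonneg _))
  nlinarith [c1, c2', c3, hextra]
end

section
/- Let L : ℝ^d → ℝ be differentiable and μ_L-strongly convex (L(w') − L(w) − ⟨w' − w, ∇L(w)⟩ ≥ (μ_L/2)‖w' − w‖² for all w, w'), let R : ℝ^d → ℝ and H : ℝ^s → ℝ be convex, and let G : ℝ^s → ℝ^d be differentiable, ν_G-strongly smooth, and lower-isometric with constant ι_G > 0 (ι_G‖z' − z‖ ≤ ‖G(z') − G(z)‖ for all z, z'). Fix ρ > 0 and define L_ρ(w, z, λ) := L(w) + R(w) + H(z) + ⟨w − G(z), λ⟩ + (ρ/2)‖w − G(z)‖². Let (w*, z*, λ*) satisfy the feasibility condition w* = G(z*) and the first-order optimality conditions: −(∇L(w*)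 + λ*) is a subgradient of R at w*, and DG(z*)ᵀλ* is a subgradient of H at z*. Then for every (w, z) ∈ ℝ^d × ℝ^s and every λ ∈ ℝ^d with ‖λ‖ ≤ λ_max: L_ρ(w, z, λ) − L_ρ(w*, z*, λ*) ≥ ((μ_L − 2ρ)/2)‖w − w*‖² + (1/2)(ρι_G²/2 − ν_G‖λ*‖)‖z − z*‖² − (3/ρ)(λ_max² + ‖λ*‖²). (Inequality (1) of the restricted strong convexity lemma for the augmented Lagrangian.) -/
open scoped RealInnerProductSpace

set_option maxHeartbeats 1000000

/-- inequality (1) of the restricted strong convexity lemma for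
the augmented Lagrangian. Under strong convexity of `L`, convexity of `R, H`,
strong smoothness and lower-isometry of `G`, and first-order optimality of
`(w*, z*, λ*)`, the augmented Lagrangian grows at least quadratically around
`(w*, z*)`, up to an additive error `(3/ρ)(λ_max² + ‖λ*‖²)`. -/
theorem augmented_lagrangian_restricted_strong_convexity {s d : ℕ}
    (L : EuclideanSpace ℝ (Fin d) → ℝ)
    (gradL : EuclideanSpace ℝ (Fin d) → EuclideanSpace ℝ (Fin d))
    (hL : ∀ w, HasGradientAt L (gradL w) w)
    (μL : ℝ)
    (hstrong : ∀ w w' : EuclideanSpace ℝ (Fin d),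
      L w' - L w - ⟪w' - w, gradL w⟫ ≥ μL / 2 * ‖w' - w‖ ^ 2)
    (R : EuclideanSpace ℝ (Fin d) → ℝ) (hR : ConvexOn ℝ Set.univ R)
    (H : EuclideanSpace ℝ (Fin s) → ℝ) (hH : ConvexOn ℝ Set.univ H)
    (G : EuclideanSpace ℝ (Fin s) → EuclideanSpace ℝ (Fin d))
    (DG : EuclideanSpace ℝ (Fin s) →
      EuclideanSpace ℝ (Fin s) →L[ℝ] EuclideanSpace ℝ (Fin d))
    (hG : ∀ z, HasFDerivAt G (DG z) z)
    (νG : ℝ)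
    (hsmooth : ∀ z z' : EuclideanSpace ℝ (Fin s),
      ‖G z' - G z - DG z (z' - z)‖ ≤ νG / 2 * ‖z' - z‖ ^ 2)
    (ιG : ℝ) (hιG : 0 < ιG)
    (hlower : ∀ z z' : EuclideanSpace ℝ (Fin s), ιG * ‖z' - z‖ ≤ ‖G z' - G z‖)
    (ρ : ℝ) (hρ : 0 < ρ)
    (wstar : EuclideanSpace ℝ (Fin d)) (zstar : EuclideanSpace ℝ (Fin s))
    (lamstar : EuclideanSpace ℝ (Fin d))
    (hfeas : wstar = G zstar)
    (hsubR : ∀ w' : EuclideanSpace ℝ (Fin d),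
      R w' ≥ R wstar + ⟪-(gradL wstar + lamstar), w' - wstar⟫)
    (hsubH : ∀ z' : EuclideanSpace ℝ (Fin s),
      H z' ≥ H zstar + ⟪(DG zstar).adjoint lamstar, z' - zstar⟫)
    (lamMax : ℝ) :
    ∀ (w : EuclideanSpace ℝ (Fin d)) (z : EuclideanSpace ℝ (Fin s))
      (lam : EuclideanSpace ℝ (Fin d)), ‖lam‖ ≤ lamMax →
      (L w + R w + H z + ⟪w - G z, lam⟫ + ρ / 2 * ‖w - G z‖ ^ 2)
        - (L wstar + R wstar + H zstar + ⟪wstar - G zstar, lamstar⟫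
            + ρ / 2 * ‖wstar - G zstar‖ ^ 2)
      ≥ (μL - 2 * ρ) / 2 * ‖w - wstar‖ ^ 2
        + 1 / 2 * (ρ * ιG ^ 2 / 2 - νG * ‖lamstar‖) * ‖z - zstar‖ ^ 2
        - 3 / ρ * (lamMax ^ 2 + ‖lamstar‖ ^ 2) := by
  intro w z lam hlam
  have hfeas0 : wstar - G zstar = 0 := by rw [hfeas, sub_self]
  rw [hfeas0]
  simp only [inner_zero_left, norm_zero]
  set A : ℝ := ‖w - wstar‖ with hAdef
  set Z : ℝ := ‖z - zstar‖ with hZdef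
  set F : ℝ := ‖w - G z‖ with hFdef
  set B : ℝ := ‖wstar - G z‖ with hBdef
  set V : ℝ := ‖lam - lamstar‖ with hVdef
  set S : ℝ := ‖lamstar‖ with hSdef
  have hA0 : 0 ≤ A := norm_nonneg _
  have hZ0 : 0 ≤ Z := norm_nonneg _
  have hF0 : 0 ≤ F := norm_nonneg _
  have hB0 : 0 ≤ B := norm_nonneg _
  have hV0 : 0 ≤ V := norm_nonneg _
  have hS0 : 0 ≤ S := norm_nonneg _
  -- Step (i): lower bound on L + R + H difference
  have hsL := hstrong wstar w
  have hRw := hsubR w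
  have hHz := hsubH z
  have hadj : ⟪(DG zstar).adjoint lamstar, z - zstar⟫
      = ⟪lamstar, DG zstar (z - zstar)⟫ :=
    ContinuousLinearMap.adjoint_inner_left _ _ _
  have hr := hsmooth zstar z
  have hinner_r : ⟪lamstar, G z - G zstar - DG zstar (z - zstar)⟫
      ≤ S * (νG / 2 * Z ^ 2) :=
    le_trans (real_inner_le_norm _ _) (mul_le_mul_of_nonneg_left hr hS0)
  have hexpand : ⟪lamstar, DG zstar (z - zstar)⟫
      = ⟪lamstar, G z - G zstar⟫
        - ⟪lamstar, G z - G zstar - DG zstar (z - zstar)⟫ := by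
    simp only [inner_sub_right]; ring
  have hkey : ⟪w - wstar, gradL wstar⟫ + ⟪-(gradL wstar + lamstar), w - wstar⟫
      + ⟪lamstar, G z - G zstar⟫ = -⟪w - G z, lamstar⟫ := by
    rw [← hfeas]
    simp only [inner_sub_left, inner_sub_right, inner_neg_left, inner_add_left,
      real_inner_comm w lamstar, real_inner_comm wstar lamstar,
      real_inner_comm (G z) lamstar, real_inner_comm w (gradL wstar),
      real_inner_comm wstar (gradL wstar)]
    ring
  have h1 : L w + R w + H z - (L wstar + R wstar + H zstar)
      ≥ μL / 2 * A ^ 2 - νG / 2 * S * Z ^ 2 - ⟪w - G z, lamstar⟫ := by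
    linarith [hsL, hRw, hHz, hadj.le, hadj.ge, hexpand.le, hexpand.ge,
      hinner_r, hkey.le, hkey.ge]
  -- split the multiplier inner product
  have hsplit : ⟪w - G z, lam⟫
      = ⟪w - G z, lamstar⟫ + ⟪w - G z, lam - lamstar⟫ := by
    rw [inner_sub_right]; ring
  -- (ii): Cauchy-Schwarz + AM-GM
  have hcs : ⟪w - G z, lam - lamstar⟫ ≥ -(F * V) := by
    have := abs_real_inner_le_norm (w - G z) (lam - lamstar)
    rw [abs_le] at this
    exact this.1
  have hamgm : F * V ≤ ρ / 6 * F ^ 2 + 3 / (2 * ρ) * V ^ 2 := by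
    have heq : ρ / 6 * F ^ 2 + 3 / (2 * ρ) * V ^ 2 - F * V
        = (ρ * F - 3 * V) ^ 2 / (6 * ρ) := by
      field_simp
      ring
    linarith [heq, div_nonneg (sq_nonneg (ρ * F - 3 * V)) (by positivity : (0:ℝ) ≤ 6 * ρ)]
  -- (iii): F^2 ≥ (3/4)B^2 - 3A^2
  have hBle : B ≤ A + F := by
    calc B = ‖(wstar - w) + (w - G z)‖ := by rw [hBdef]; congr 1; abel
    _ ≤ ‖wstar - w‖ + ‖w - G z‖ := norm_add_le _ _
    _ = A + F := by rw [norm_sub_rev]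
  have h3 : 3 / 4 * B ^ 2 - 3 * A ^ 2 ≤ F ^ 2 := by
    nlinarith [sq_nonneg (3 * A - F), mul_self_le_mul_self hB0 hBle]
  -- (iv): V^2 ≤ 2(lamMax^2 + S^2)
  have hVle : V ≤ lamMax + S := by
    calc V ≤ ‖lam‖ + ‖lamstar‖ := norm_sub_le _ _
    _ ≤ lamMax + S := by rw [hSdef]; linarith
  have h4 : V ^ 2 ≤ 2 * (lamMax ^ 2 + S ^ 2) := by
    nlinarith [sq_nonneg (lamMax - S), mul_self_le_mul_self hV0 hVle]
  -- (v): ιG^2 Z^2 ≤ B^2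
  have h5 : ιG * Z ≤ B := by
    have := hlower zstar z
    rw [hBdef, hfeas, norm_sub_rev]
    exact this
  have h5' : ιG ^ 2 * Z ^ 2 ≤ B ^ 2 := by
    nlinarith [mul_self_le_mul_self (by positivity : (0:ℝ) ≤ ιG * Z) h5]
  -- combine (multiplied versions)
  have h3' : ρ / 3 * (3 / 4 * B ^ 2 - 3 * A ^ 2) ≤ ρ / 3 * F ^ 2 :=
    mul_le_mul_of_nonneg_left h3 (by positivity)
  have h5'' : ρ / 4 * (ιG ^ 2 * Z ^ 2) ≤ ρ / 4 * B ^ 2 :=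
    mul_le_mul_of_nonneg_left h5' (by positivity)
  have h4' : 3 / (2 * ρ) * V ^ 2 ≤ 3 / ρ * (lamMax ^ 2 + S ^ 2) := by
    have := mul_le_mul_of_nonneg_left h4 (by positivity : (0:ℝ) ≤ 3 / (2 * ρ))
    have heq : 3 / (2 * ρ) * (2 * (lamMax ^ 2 + S ^ 2))
        = 3 / ρ * (lamMax ^ 2 + S ^ 2) := by
      field_simp
    linarith
  rw [hsplit]
  linarith [h1, hcs, hamgm, h3', h5'', h4']
end

section
/- Let L : ℝ^d → ℝ be convex and differentiable, let G : ℝ^s → ℝ^d be differentiable and ν_G-strongly smooth, let ρ > 0, and let (w*, z*) satisfy w* = G(z*). Define the smooth augmented Lagrangian L'_ρ(w, z, λ) := L(w) + ⟨w − G(z), λ⟩ + (ρ/2)‖w − G(z)‖², with joint gradient in (w, z) given by ∇_w L'_ρ = ∇L(w) + λ + ρ(w − G(z)) and ∇_z L'_ρ = −DG(z)ᵀ(λ + ρ(w − G(z))). Then for every (w, z) with ‖w − G(z)‖ ≤ a and every λ with ‖λ‖ ≤ λ_max: L'_ρ(w*, z*, λ) − L'_ρ(w, z, λ) − ⟨w*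 − w, ∇_w L'_ρ(w, z, λ)⟩ − ⟨z* − z, ∇_z L'_ρ(w, z, λ)⟩ ≥ −(ν_G(λ_max + ρ·a)/2)‖z* − z‖². (Inequality (2) of the restricted strong convexity lemma; note L'_ρ(w*, z*, λ) = L(w*) since w* = G(z*).) -/
/-!
With `e := G z* - G z - DG z (z* - z)`, the Taylor remainder of `G`, feasibility gives
`w* - w = e + DG z (z* - z) - (w - G z)`; the `DG z` terms then cancel against the adjoint term,
and the linearisation gap of the augmented Lagrangian becomes
`(L w* - L w - ⟪∇L w, w* - w⟫) + (ρ/2)‖w - G z‖² - ⟪e, λ + ρ (w - G z)⟫`.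
The first summand is nonnegative by convexity, the second since `ρ > 0`, and by Cauchy–Schwarz
and strong smoothness the last is at most `(ν_G/2)‖z* - z‖² (λ_max + ρ a)`.
-/

open scoped RealInnerProductSpace

theorem ConvexOn.le_sub_of_hasFDerivAt {E : Type*} [NormedAddCommGroup E] [NormedSpace ℝ E]
    {s : Set E} {f : E → ℝ} {f' : E →L[ℝ] ℝ} {x y : E} (hf : ConvexOn ℝ s f)
    (hx : x ∈ s) (hy : y ∈ s) (hfx : HasFDerivAt f f' x) :
    f' (y - x) ≤ f y - f x := by
  let ℓ : ℝ →ᵃ[ℝ] E := AffineMap.lineMap x y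
  have hderiv : HasDerivAt (f ∘ ℓ) (f' (y - x)) 0 := by
    rw [← AffineMap.lineMap_apply_zero (k := ℝ) x y] at hfx
    exact hfx.comp_hasDerivAt (0 : ℝ) AffineMap.hasDerivAt_lineMap
  have := (hf.comp_affineMap ℓ).le_slope_of_hasDerivAt (x := 0) (y := 1) (by simpa [ℓ] using hx)
    (by simpa [ℓ] using hy) zero_lt_one hderiv
  simpa [slope_def_field, ℓ] using this

theorem ConvexOn.inner_le_sub_of_hasGradientAt {E : Type*} [NormedAddCommGroup E]
    [InnerProductSpace ℝ E] [CompleteSpace E] {s : Set E} {f : E → ℝ} {g x y : E}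
    (hf : ConvexOn ℝ s f) (hx : x ∈ s) (hy : y ∈ s) (hfx : HasGradientAt f g x) :
    ⟪g, y - x⟫ ≤ f y - f x :=
  hf.le_sub_of_hasFDerivAt hx hy hfx

section AugmentedLagrangian

variable {E F : Type*} [NormedAddCommGroup E] [InnerProductSpace ℝ E] [CompleteSpace E]
  [NormedAddCommGroup F] [InnerProductSpace ℝ F] [CompleteSpace F]

/-- The smooth augmented Lagrangian `L'_ρ(w, z, λ)` of `min L w` subject to `w = G z`. -/
noncomputable def augLagrangian (L : F → ℝ) (G : E → F) (ρ : ℝ) (w : F) (z : E) (lam : F) : ℝ :=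
  L w + ⟪w - G z, lam⟫ + ρ / 2 * ‖w - G z‖ ^ 2

theorem augLagrangian_sub_linearization (L : F → ℝ) (G : E → F) (ρ : ℝ) (g : F)
    (A : E →L[ℝ] F) {w' w lam : F} {z' z : E} (hfeas : w' = G z') :
    augLagrangian L G ρ w' z' lam - augLagrangian L G ρ w z lam
        - ⟪w' - w, g + lam + ρ • (w - G z)⟫ - ⟪z' - z, -(A.adjoint (lam + ρ • (w - G z)))⟫
      = (L w' - L w - ⟪g, w' - w⟫) + ρ / 2 * ‖w - G z‖ ^ 2
        - ⟪G z' - G z - A (z' - z), lam + ρ • (w - G z)⟫ := by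
  subst hfeas
  have hsplit : G z' - w = (G z' - G z - A (z' - z)) + A (z' - z) - (w - G z) := by abel
  simp only [augLagrangian, sub_self, inner_zero_left, norm_zero, inner_neg_right,
    ContinuousLinearMap.adjoint_inner_right, hsplit]
  generalize G z' - G z - A (z' - z) = e, A (z' - z) = u, w - G z = r
  simp only [inner_add_left, inner_sub_left, inner_add_right, inner_sub_right, inner_smul_right,
    real_inner_self_eq_norm_sq, real_inner_comm g, real_inner_comm lam]
  ring

end AugmentedLagrangian

theorem augmented_lagrangian_weak_convexity_bound_general {s d : ℕ}
    (L : EuclideanSpace ℝ (Fin d) → ℝ)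
    (hconv : ConvexOn ℝ Set.univ L)
    (gradL : EuclideanSpace ℝ (Fin d) → EuclideanSpace ℝ (Fin d))
    (hL : ∀ w, HasGradientAt L (gradL w) w)
    (G : EuclideanSpace ℝ (Fin s) → EuclideanSpace ℝ (Fin d))
    (DG : EuclideanSpace ℝ (Fin s) →
      EuclideanSpace ℝ (Fin s) →L[ℝ] EuclideanSpace ℝ (Fin d))
    (νG : ℝ)
    (hsmooth : ∀ z z' : EuclideanSpace ℝ (Fin s),
      ‖G z' - G z - DG z (z' - z)‖ ≤ νG / 2 * ‖z' - z‖ ^ 2)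
    (ρ : ℝ) (hρ : 0 < ρ)
    (wstar : EuclideanSpace ℝ (Fin d)) (zstar : EuclideanSpace ℝ (Fin s))
    (hfeas : wstar = G zstar)
    (lamMax a : ℝ) :
    ∀ (w : EuclideanSpace ℝ (Fin d)) (z : EuclideanSpace ℝ (Fin s))
      (lam : EuclideanSpace ℝ (Fin d)),
      ‖w - G z‖ ≤ a → ‖lam‖ ≤ lamMax →
      (L wstar + ⟪wstar - G zstar, lam⟫ + ρ / 2 * ‖wstar - G zstar‖ ^ 2)
        - (L w + ⟪w - G z, lam⟫ + ρ / 2 * ‖w - G z‖ ^ 2)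
        - ⟪wstar - w, gradL w + lam + ρ • (w - G z)⟫
        - ⟪zstar - z, -((DG z).adjoint (lam + ρ • (w - G z)))⟫
      ≥ -(νG * (lamMax + ρ * a) / 2) * ‖zstar - z‖ ^ 2 := by
  intro w z lam hres hlam
  have hgap := augLagrangian_sub_linearization L G ρ (gradL w) (DG z)
    (w := w) (z := z) (lam := lam) hfeas
  simp only [augLagrangian] at hgap
  rw [hgap]
  have hbregman : 0 ≤ L wstar - L w - ⟪gradL w, wstar - w⟫ := by
    linarith [hconv.inner_le_sub_of_hasGradientAt (Set.mem_univ w) (Set.mem_univ wstar) (hL w)]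
  have hmult : ‖lam + ρ • (w - G z)‖ ≤ lamMax + ρ * a :=
    calc ‖lam + ρ • (w - G z)‖ ≤ ‖lam‖ + ρ * ‖w - G z‖ := by
          simpa [norm_smul, abs_of_pos hρ] using norm_add_le lam (ρ • (w - G z))
      _ ≤ lamMax + ρ * a := by gcongr
  have hremainder := hsmooth z zstar
  have hcurv : ⟪G zstar - G z - DG z (zstar - z), lam + ρ • (w - G z)⟫
      ≤ νG / 2 * ‖zstar - z‖ ^ 2 * (lamMax + ρ * a) :=
    (real_inner_le_norm _ _).trans
      (mul_le_mul hremainder hmult (norm_nonneg _) ((norm_nonneg _).trans hremainder))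
  have hpenalty : 0 ≤ ρ / 2 * ‖w - G z‖ ^ 2 := by positivity
  linarith

/-- inequality (2) of the restricted strong convexity lemma.
For convex differentiable `L`, `ν_G`-strongly smooth `G`, and a feasible
`(w*, z*)` (i.e. `w* = G z*`), the smooth augmented Lagrangian
`L'_ρ(w, z, λ) := L w + ⟪w − G z, λ⟫ + (ρ/2)‖w − G z‖²` satisfies the lower
curvature bound with constant `−ν_G(λ_max + ρ·a)/2` in the `z` direction. -/
theorem augmented_lagrangian_weak_convexity_bound {s d : ℕ}
    (L : EuclideanSpace ℝ (Fin d) → ℝ)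
    (hconv : ConvexOn ℝ Set.univ L)
    (gradL : EuclideanSpace ℝ (Fin d) → EuclideanSpace ℝ (Fin d))
    (hL : ∀ w, HasGradientAt L (gradL w) w)
    (G : EuclideanSpace ℝ (Fin s) → EuclideanSpace ℝ (Fin d))
    (DG : EuclideanSpace ℝ (Fin s) →
      EuclideanSpace ℝ (Fin s) →L[ℝ] EuclideanSpace ℝ (Fin d))
    (hG : ∀ z, HasFDerivAt G (DG z) z)
    (νG : ℝ)
    (hsmooth : ∀ z z' : EuclideanSpace ℝ (Fin s),
      ‖G z' - G z - DG z (z' - z)‖ ≤ νG / 2 * ‖z' - z‖ ^ 2)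
    (ρ : ℝ) (hρ : 0 < ρ)
    (wstar : EuclideanSpace ℝ (Fin d)) (zstar : EuclideanSpace ℝ (Fin s))
    (hfeas : wstar = G zstar)
    (lamMax a : ℝ) :
    ∀ (w : EuclideanSpace ℝ (Fin d)) (z : EuclideanSpace ℝ (Fin s))
      (lam : EuclideanSpace ℝ (Fin d)),
      ‖w - G z‖ ≤ a → ‖lam‖ ≤ lamMax →
      (L wstar + ⟪wstar - G zstar, lam⟫ + ρ / 2 * ‖wstar - G zstar‖ ^ 2)
        - (L w + ⟪w - G z, lam⟫ + ρ / 2 * ‖w - G z‖ ^ 2)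
        - ⟪wstar - w, gradL w + lam + ρ • (w - G z)⟫
        - ⟪zstar - z, -((DG z).adjoint (lam + ρ • (w - G z)))⟫
      ≥ -(νG * (lamMax + ρ * a) / 2) * ‖zstar - z‖ ^ 2 :=
  augmented_lagrangian_weak_convexity_bound_general L hconv gradL hL G DG νG hsmooth ρ hρ wstar
    zstar hfeas lamMax a
end

section
/- Let f : ℝ^d × ℝ^s → ℝ, G : ℝ^s → ℝ^d, ρ > 0, and let (w*, z*) satisfy w* = G(z*). Suppose λ* ∈ ℝ^d is an optimal dual vector in the sense that f(w, z) + ⟨w − G(z), λ*⟩ ≥ f(w*, z*) for every (w, z) ∈ ℝ^d × ℝ^s. Define L_ρ(w, z, λ) := f(w, z) + ⟨w − G(z), λ⟩ + (ρ/2)‖w − G(z)‖². Then for every (w, z) and every λ ∈ ℝ^d with ‖λ‖ ≤ λ_max: (ρ/4)‖w − G(z)‖² ≤ L_ρ(w, z, λ) − L_ρ(w*, z*, λ*) + (2/ρ)(λ_max² + ‖λ*‖²); equivalently, ‖w − G(z)‖² ≤ (4/ρ)(L_ρ(w, z, λ) − L_ρ(w*, z*, λ*)) + (8/ρ²)(λ_max²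 + ‖λ*‖²). (The feasibility-gap bound in the proof of Theorem 1; here f plays the role of L + R + H.) -/
open scoped RealInnerProductSpace

/-- the feasibility-gap bound in the proof of Theorem 1.
If `λ*` is an optimal dual vector for the feasible point `(w*, z*)` (i.e.
`f(w,z) + ⟪w − G z, λ*⟫ ≥ f(w*, z*)` for all `(w, z)` and `w* = G z*`), then
for the augmented Lagrangian
`L_ρ(w, z, λ) := f(w, z) + ⟪w − G z, λ⟫ + (ρ/2)‖w − G z‖²` and any `λ` with
`‖λ‖ ≤ λ_max`, the feasibility gap `‖w − G z‖²` is controlled by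
`L_ρ(w, z, λ) − L_ρ(w*, z*, λ*)`. -/
theorem feasibility_gap_bound {s d : ℕ}
    (f : EuclideanSpace ℝ (Fin d) × EuclideanSpace ℝ (Fin s) → ℝ)
    (G : EuclideanSpace ℝ (Fin s) → EuclideanSpace ℝ (Fin d))
    (ρ : ℝ) (hρ : 0 < ρ)
    (wstar : EuclideanSpace ℝ (Fin d)) (zstar : EuclideanSpace ℝ (Fin s))
    (hfeas : wstar = G zstar)
    (lamstar : EuclideanSpace ℝ (Fin d))
    (hdual : ∀ (w : EuclideanSpace ℝ (Fin d)) (z : EuclideanSpace ℝ (Fin s)),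
      f (w, z) + ⟪w - G z, lamstar⟫ ≥ f (wstar, zstar))
    (lamMax : ℝ) :
    ∀ (w : EuclideanSpace ℝ (Fin d)) (z : EuclideanSpace ℝ (Fin s))
      (lam : EuclideanSpace ℝ (Fin d)), ‖lam‖ ≤ lamMax →
      (ρ / 4 * ‖w - G z‖ ^ 2
        ≤ (f (w, z) + ⟪w - G z, lam⟫ + ρ / 2 * ‖w - G z‖ ^ 2)
          - (f (wstar, zstar) + ⟪wstar - G zstar, lamstar⟫
              + ρ / 2 * ‖wstar - G zstar‖ ^ 2)
          + 2 / ρ * (lamMax ^ 2 + ‖lamstar‖ ^ 2)) ∧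
      (‖w - G z‖ ^ 2
        ≤ 4 / ρ * ((f (w, z) + ⟪w - G z, lam⟫ + ρ / 2 * ‖w - G z‖ ^ 2)
            - (f (wstar, zstar) + ⟪wstar - G zstar, lamstar⟫
                + ρ / 2 * ‖wstar - G zstar‖ ^ 2))
          + 8 / ρ ^ 2 * (lamMax ^ 2 + ‖lamstar‖ ^ 2)) := by
  intro w z lam hlam
  have hz : wstar - G zstar = 0 := by rw [hfeas]; simp
  have hz0 : ⟪wstar - G zstar, lamstar⟫ = (0:ℝ) := by rw [hz]; simp
  have hzn : ‖wstar - G zstar‖ = 0 := by rw [hz]; simp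
  have h1 := hdual w z
  have h2' := abs_le.mp (abs_real_inner_le_norm (w - G z) lam)
  have h3' := abs_le.mp (abs_real_inner_le_norm (w - G z) lamstar)
  have hn : (0:ℝ) ≤ ‖w - G z‖ := norm_nonneg _
  have hns : (0:ℝ) ≤ ‖lamstar‖ := norm_nonneg _
  have hl0 : (0:ℝ) ≤ lamMax := le_trans (norm_nonneg _) hlam
  set r := ‖w - G z‖ with hr
  have amgm : r * (lamMax + ‖lamstar‖)
      ≤ ρ / 4 * r ^ 2 + 1 / ρ * (lamMax + ‖lamstar‖) ^ 2 := by
    have e : ρ / 4 * r ^ 2 + 1 / ρ * (lamMax + ‖lamstar‖) ^ 2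
        - r * (lamMax + ‖lamstar‖) = (ρ * r - 2 * (lamMax + ‖lamstar‖)) ^ 2 / (4 * ρ) := by
      field_simp; ring
    nlinarith [div_nonneg (sq_nonneg (ρ * r - 2 * (lamMax + ‖lamstar‖)))
      (by positivity : (0:ℝ) ≤ 4 * ρ)]
  have h1r : 1 / ρ * (lamMax + ‖lamstar‖) ^ 2 ≤ 2 / ρ * (lamMax ^ 2 + ‖lamstar‖ ^ 2) := by
    rw [div_mul_eq_mul_div, div_mul_eq_mul_div, div_le_div_iff₀ hρ hρ]
    nlinarith [sq_nonneg (lamMax - ‖lamstar‖)]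
  have hmul : r * ‖lam‖ ≤ r * lamMax := mul_le_mul_of_nonneg_left hlam hn
  have key : ρ / 4 * r ^ 2
      ≤ (f (w, z) + ⟪w - G z, lam⟫ + ρ / 2 * r ^ 2)
        - (f (wstar, zstar) + ⟪wstar - G zstar, lamstar⟫
            + ρ / 2 * ‖wstar - G zstar‖ ^ 2)
        + 2 / ρ * (lamMax ^ 2 + ‖lamstar‖ ^ 2) := by
    rw [hz0, hzn]
    nlinarith [h2'.1, h3'.2, sq_nonneg r]
  refine ⟨key, ?_⟩
  set A := (f (w, z) + ⟪w - G z, lam⟫ + ρ / 2 * r ^ 2)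
      - (f (wstar, zstar) + ⟪wstar - G zstar, lamstar⟫
          + ρ / 2 * ‖wstar - G zstar‖ ^ 2) with hA
  set B := lamMax ^ 2 + ‖lamstar‖ ^ 2 with hB
  have h6 := mul_le_mul_of_nonneg_left key (by positivity : (0:ℝ) ≤ 4 / ρ)
  have e1 : 4 / ρ * (ρ / 4 * r ^ 2) = r ^ 2 := by field_simp
  have e2 : 4 / ρ * (A + 2 / ρ * B) = 4 / ρ * A + 8 / ρ ^ 2 * B := by
    field_simp; ring
  linarith
end

section
/- Let L : ℝ^d → ℝ be differentiable and ν_L-strongly smooth, so that ‖∇L(x) − ∇L(y)‖ ≤ ν_L‖x − y‖ for all x, y. Let G : ℝ^s → ℝ^d be differentiable with ‖DG(z)ᵀu‖ ≤ κ_G‖u‖ for all z ∈ ℝ^s, u ∈ ℝ^d. Fix β, σ ≥ 0, z ∈ ℝ^s, w ∈ ℝ^d, and define the collapsed ADMM update z⁺ := z + βσ·DG(z)ᵀ(w − G(z)) − β·DG(z)ᵀ∇L(w). Then the distance of z⁺ to the gradient-descent update on L ∘ G satisfies ‖z⁺ − (z − β∇(L ∘ G)(z))‖ ≤ β·κ_G·(σ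 + ν_L)·‖w − G(z)‖, where ∇(L ∘ G)(z) = DG(z)ᵀ∇L(G(z)). In particular, the two updates coincide as the feasibility gap ‖w − G(z)‖ vanishes. (Appendix D: relation between ADMM with exact w-minimization and gradient descent.) -/
open scoped RealInnerProductSpace

/-- Appendix D: relation between ADMM with exact
`w`-minimization and gradient descent. The collapsed ADMM update
`z⁺ := z + βσ·DG(z)ᵀ(w − G(z)) − β·DG(z)ᵀ∇L(w)` satisfies
`‖z⁺ − (z − β∇(L∘G)(z))‖ ≤ βκ_G(σ + ν_L)‖w − G(z)‖`, where
`∇(L∘G)(z) = DG(z)ᵀ∇L(G(z))`; in particular the two updates coincide as the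
feasibility gap `‖w − G(z)‖` vanishes. -/
theorem admm_update_close_to_gradient_descent {s d : ℕ}
    (L : EuclideanSpace ℝ (Fin d) → ℝ)
    (gradL : EuclideanSpace ℝ (Fin d) → EuclideanSpace ℝ (Fin d))
    (hL : ∀ w, HasGradientAt L (gradL w) w)
    (νL : ℝ)
    (hLipGrad : ∀ x y : EuclideanSpace ℝ (Fin d),
      ‖gradL x - gradL y‖ ≤ νL * ‖x - y‖)
    (G : EuclideanSpace ℝ (Fin s) → EuclideanSpace ℝ (Fin d))
    (DG : EuclideanSpace ℝ (Fin s) →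
      EuclideanSpace ℝ (Fin s) →L[ℝ] EuclideanSpace ℝ (Fin d))
    (hG : ∀ z, HasFDerivAt G (DG z) z)
    (κG : ℝ)
    (hadj : ∀ (z : EuclideanSpace ℝ (Fin s)) (u : EuclideanSpace ℝ (Fin d)),
      ‖(DG z).adjoint u‖ ≤ κG * ‖u‖)
    (β σ : ℝ) (hβ : 0 ≤ β) (hσ : 0 ≤ σ)
    (z : EuclideanSpace ℝ (Fin s)) (w : EuclideanSpace ℝ (Fin d))
    (zplus : EuclideanSpace ℝ (Fin s))
    (hzplus : zplus = z + (β * σ) • (DG z).adjoint (w - G z)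
      - β • (DG z).adjoint (gradL w)) :
    ‖zplus - (z - β • (DG z).adjoint (gradL (G z)))‖
      ≤ β * κG * (σ + νL) * ‖w - G z‖ := by
  subst hzplus
  set A := (DG z).adjoint
  have heq : z + (β * σ) • A (w - G z) - β • A (gradL w)
      - (z - β • A (gradL (G z)))
      = (β * σ) • A (w - G z) - β • A (gradL w - gradL (G z)) := by
    simp only [map_sub, smul_sub]
    abel
  rw [heq]
  have h1 : ‖(β * σ) • A (w - G z)‖ ≤ β * σ * (κG * ‖w - G z‖) := by
    rw [norm_smul, Real.norm_eq_abs, abs_of_nonneg (mul_nonneg hβ hσ)]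
    exact mul_le_mul_of_nonneg_left (hadj z _) (mul_nonneg hβ hσ)
  rcases Nat.eq_zero_or_pos d with hd | hd
  · subst hd
    have hw : w - G z = 0 := Subsingleton.elim _ _
    have hg : gradL w - gradL (G z) = 0 := Subsingleton.elim _ _
    rw [hw, hg]
    simp
  have hκ : 0 ≤ κG := by
    have hu : ‖(EuclideanSpace.single (⟨0, hd⟩ : Fin d) (1:ℝ))‖ = 1 := by
      simp [EuclideanSpace.norm_single]
    have := hadj z (EuclideanSpace.single (⟨0, hd⟩ : Fin d) (1:ℝ))
    rw [hu, mul_one] at this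
    exact le_trans (norm_nonneg _) this
  have h2 : ‖β • A (gradL w - gradL (G z))‖ ≤ β * (κG * (νL * ‖w - G z‖)) := by
    rw [norm_smul, Real.norm_eq_abs, abs_of_nonneg hβ]
    refine mul_le_mul_of_nonneg_left ?_ hβ
    calc ‖A (gradL w - gradL (G z))‖ ≤ κG * ‖gradL w - gradL (G z)‖ := hadj z _
      _ ≤ κG * (νL * ‖w - G z‖) :=
        mul_le_mul_of_nonneg_left (hLipGrad w (G z)) hκ
  calc ‖(β * σ) • A (w - G z) - β • A (gradL w - gradL (G z))‖
      ≤ ‖(β * σ) • A (w - G z)‖ + ‖β • A (gradL w - gradL (G z))‖ :=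
        norm_sub_le _ _
    _ ≤ β * σ * (κG * ‖w - G z‖) + β * (κG * (νL * ‖w - G z‖)) :=
        add_le_add h1 h2
    _ = β * κG * (σ + νL) * ‖w - G z‖ := by ring
end
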